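/- arXiv:1305.7477 — 2 statements merged into one kernel-verified Lean document; each statement's English description precedes it below -/
import Mathlib

section
/- Consistency of the restricted M-estimator: Let ℓ be convex and twice continuously differentiable, M ⊆ ℝ^p a subspace containing θ*, and suppose ℓ is m-strongly convex on a convex set C ⊆ M containing θ* and the minimizer θ̂ of θ ↦ ℓ(θ) + λ h_A(θ) over M. Let ‖·‖ be a norm with dual ‖·‖_*, and define κ_{err*} = sup{‖x‖_* : ‖x‖₂ ≤ 1, x ∈ M}, κ_A = sup{h_A(x) : ‖x‖₂ ≤ 1, x ∈ M}. If λ > (2τ̄/τ)‖∇ℓ(θ*)‖ for constants 0 < τ ≤ τ̄, then the minimizer θ̂ is unique and ‖θ̂ − θ*‖₂ ≤ (2/m)(κ_A + (τ/(2τ̄))κ_{err*}) λ. -/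
open RealInnerProductSpace

/-- The support function of a set `C` at `x`. -/
noncomputable def suppFn {p : ℕ} (C : Set (EuclideanSpace ℝ (Fin p)))
    (x : EuclideanSpace ℝ (Fin p)) : ℝ :=
  sSup ((fun y => ⟪y, x⟫) '' C)

/-!
Uniqueness: if `θ̂` and `θ'` both minimise `ℓ + λ h_A` over `M`, convexity of both summands
forces `ℓ` to be affine on the segment `[θ̂, θ']`, so the second derivative of `ℓ` at `θ̂` in
the direction `θ' - θ̂` vanishes, which strong convexity at `θ̂ ∈ C` forbids unless `θ' = θ̂`.

Error bound: with `Δ = θ̂ - θ*`, the second-order Taylor bound along `[θ*, θ̂] ⊆ C` gives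
`ℓ θ̂ ≥ ℓ θ* + ⟪∇ℓ θ*, Δ⟫ + m ‖Δ‖² / 2`. Comparing with `θ*` in the optimality of `θ̂` leaves
`m ‖Δ‖² / 2 ≤ λ (h_A θ* - h_A θ̂) + ⟪∇ℓ θ*, -Δ⟫`. Subadditivity and positive homogeneity of
`h_A` bound the first term by `λ κ_A ‖Δ‖`. The dual norm is the support function of the unit
ball of `‖·‖`, which is bounded since all norms on `ℝ^p` are equivalent, so the second term is
at most `‖∇ℓ θ*‖ κ_err* ‖Δ‖ ≤ (τ / 2τ̄) λ κ_err* ‖Δ‖`. Dividing by `‖Δ‖` gives the bound.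
-/

open Set Bornology

lemma HasDerivAt.eq_of_eq_affine_on_Ico {f : ℝ → ℝ} {a b f' s : ℝ} (hab : a < b)
    (hf : HasDerivAt f f' a) (haff : ∀ t ∈ Ico a b, f t = f a + (t - a) * s) : f' = s := by
  have hs : HasDerivWithinAt f s (Ici a) a := by
    have : HasDerivAt (fun t => f a + (t - a) * s) s a := by
      simpa using (((hasDerivAt_id a).sub_const a).mul_const s).const_add (f a)
    refine this.hasDerivWithinAt.congr_of_eventuallyEq ?_ (by simp)
    filter_upwards [Ico_mem_nhdsGE hab] with t ht using haff t ht
  exact (uniqueDiffOn_Ici a a self_mem_Ici).eq_deriv _ hf.hasDerivWithinAt hs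

lemma HasDerivAt.eq_zero_of_eq_affine_on_Ico {f f' : ℝ → ℝ} {a b f'' s : ℝ} (hab : a < b)
    (hf : ∀ t ∈ Ico a b, HasDerivAt f (f' t) t) (hf' : HasDerivAt f' f'' a)
    (haff : ∀ t ∈ Ico a b, f t = f a + (t - a) * s) : f'' = 0 := by
  have hconst : ∀ t ∈ Ico a b, f' t = s := fun t ht =>
    (hf t ht).eq_of_eq_affine_on_Ico ht.2 fun u hu => by
      rw [haff u ⟨ht.1.trans hu.1, hu.2⟩, haff t ht]; ring
  exact hf'.eq_of_eq_affine_on_Ico hab fun t ht => by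
    rw [hconst t ht, hconst a ⟨le_rfl, hab⟩]; ring

lemma add_add_half_le_of_le_deriv2 {g g' g'' : ℝ → ℝ} {c : ℝ}
    (hg : ∀ t, HasDerivAt g (g' t) t) (hg' : ∀ t, HasDerivAt g' (g'' t) t)
    (hc : ∀ t ∈ Icc (0 : ℝ) 1, c ≤ g'' t) : g 0 + g' 0 + c / 2 ≤ g 1 := by
  have hd' (t : ℝ) : HasDerivAt (fun t => g' t - c * t) (g'' t - c) t := by
    simpa using (hg' t).fun_sub ((hasDerivAt_id' t).const_mul c)
  have hmono' : MonotoneOn (fun t => g' t - c * t) (Icc 0 1) :=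
    monotoneOn_of_hasDerivWithinAt_nonneg (convex_Icc 0 1)
      (fun t _ => (hd' t).continuousAt.continuousWithinAt) (fun t _ => (hd' t).hasDerivWithinAt)
      fun t ht => sub_nonneg.2 (hc t (interior_subset ht))
  have hd (t : ℝ) : HasDerivAt (fun t => g t - g' 0 * t - c * t ^ 2 / 2)
      ((g' t - c * t) - (g' 0 - c * 0)) t := by
    have := ((hg t).fun_sub ((hasDerivAt_id' t).const_mul (g' 0))).fun_sub
      (((hasDerivAt_pow 2 t).const_mul c).div_const 2)
    exact this.congr_deriv (by simp; ring)
  have hmono : MonotoneOn (fun t => g t - g' 0 * t - c * t ^ 2 / 2) (Icc 0 1) :=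
    monotoneOn_of_hasDerivWithinAt_nonneg (convex_Icc 0 1)
      (fun t _ => (hd t).continuousAt.continuousWithinAt) (fun t _ => (hd t).hasDerivWithinAt)
      fun t ht => sub_nonneg.2 <| hmono' (left_mem_Icc.2 zero_le_one) (interior_subset ht)
        (interior_subset ht).1
  have := hmono (left_mem_Icc.2 zero_le_one) (right_mem_Icc.2 zero_le_one) zero_le_one
  simp only at this
  linarith

section NormedSpace

variable {E : Type*} [NormedAddCommGroup E] [NormedSpace ℝ E]

lemma hasDerivAt_comp_add_smul {F : Type*} [NormedAddCommGroup F] [NormedSpace ℝ F]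
    {f : E → F} (hf : Differentiable ℝ f) (x v : E) (t : ℝ) :
    HasDerivAt (fun t : ℝ => f (x + t • v)) (fderiv ℝ f (x + t • v) v) t :=
  (hf _).hasFDerivAt.comp_hasDerivAt t <| by
    simpa using ((hasDerivAt_id t).smul_const v).const_add x

lemma ContDiff.hasDerivAt_fderiv_comp_add_smul {f : E → ℝ} (hf : ContDiff ℝ 2 f) (x v : E)
    (t : ℝ) : HasDerivAt (fun t : ℝ => fderiv ℝ f (x + t • v) v)
      (fderiv ℝ (fderiv ℝ f) (x + t • v) v v) t := by
  have h2 : Differentiable ℝ (fderiv ℝ f) :=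
    (hf.fderiv_right (m := 1) le_rfl).differentiable one_ne_zero
  simpa using (hasDerivAt_comp_add_smul h2 x v t).clm_apply (hasDerivAt_const t v)

lemma ContDiff.add_fderiv_add_half_mul_sq_le {f : E → ℝ} (hf : ContDiff ℝ 2 f) {C : Set E}
    (hC : Convex ℝ C) {x y : E} (hx : x ∈ C) (hy : y ∈ C) {m : ℝ}
    (hm : ∀ z ∈ C, m * ‖y - x‖ ^ 2 ≤ fderiv ℝ (fderiv ℝ f) z (y - x) (y - x)) :
    f x + fderiv ℝ f x (y - x) + m * ‖y - x‖ ^ 2 / 2 ≤ f y := by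
  have hseg (t : ℝ) (ht : t ∈ Icc (0 : ℝ) 1) : x + t • (y - x) ∈ C := by
    simpa [AffineMap.lineMap_apply_module', add_comm] using hC.lineMap_mem hx hy ht
  simpa using add_add_half_le_of_le_deriv2
    (hasDerivAt_comp_add_smul (hf.differentiable two_ne_zero) x (y - x))
    (hf.hasDerivAt_fderiv_comp_add_smul x (y - x)) fun t ht => hm _ (hseg t ht)

lemma ConvexOn.apply_add_smul_sub_eq_of_isMinOn_add {f g : E → ℝ} {s : Set E}
    (hf : ConvexOn ℝ s f) (hg : ConvexOn ℝ s g) {x y : E} (hx : x ∈ s) (hy : y ∈ s)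
    (hmx : IsMinOn (f + g) s x) (hmy : IsMinOn (f + g) s y) {t : ℝ}
    (ht : t ∈ Icc (0 : ℝ) 1) :
    f (x + t • (y - x)) = f x + t * (f y - f x) := by
  have hz : x + t • (y - x) = (1 - t) • x + t • y := by module
  have h1t : 0 ≤ 1 - t := sub_nonneg.2 ht.2
  have hzs : x + t • (y - x) ∈ s := hz ▸ hf.1 hx hy h1t ht.1 (by ring)
  have hfz := hf.2 hx hy h1t ht.1 (by ring)
  have hgz := hg.2 hx hy h1t ht.1 (by ring)
  have hxz : f x + g x ≤ f (x + t • (y - x)) + g (x + t • (y - x)) := hmx hzs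
  have hxy : f x + g x ≤ f y + g y := hmx hy
  have hyx : f y + g y ≤ f x + g x := hmy hx
  rw [← hz, smul_eq_mul, smul_eq_mul] at hfz hgz
  nlinarith

lemma ContDiff.eq_of_isMinOn_add {f g : E → ℝ} (hf : ContDiff ℝ 2 f) {s : Set E}
    (hfc : ConvexOn ℝ s f) (hgc : ConvexOn ℝ s g) {x y : E} (hx : x ∈ s) (hy : y ∈ s)
    (hmx : IsMinOn (f + g) s x) (hmy : IsMinOn (f + g) s y) {m : ℝ} (hm : 0 < m)
    (hsc : m * ‖y - x‖ ^ 2 ≤ fderiv ℝ (fderiv ℝ f) x (y - x) (y - x)) : y = x := by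
  have hzero : fderiv ℝ (fderiv ℝ f) x (y - x) (y - x) = 0 := by
    refine HasDerivAt.eq_zero_of_eq_affine_on_Ico (s := f y - f x) zero_lt_one
      (fun t _ => hasDerivAt_comp_add_smul (hf.differentiable two_ne_zero) x (y - x) t)
      (by simpa only [zero_smul, add_zero] using
        hf.hasDerivAt_fderiv_comp_add_smul x (y - x) 0)
      fun t ht => ?_
    simpa using
      hfc.apply_add_smul_sub_eq_of_isMinOn_add hgc hx hy hmx hmy (Ico_subset_Icc_self ht)
  rw [hzero] at hsc
  have hsq : ‖y - x‖ ^ 2 ≤ 0 := by nlinarith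
  rw [← sub_eq_zero, ← norm_eq_zero]
  exact pow_eq_zero_iff two_ne_zero |>.1 (le_antisymm hsq (sq_nonneg _))

lemma ContDiff.norm_sub_le_of_add_le_add {f g : E → ℝ} (hf : ContDiff ℝ 2 f) {C : Set E}
    (hC : Convex ℝ C) {x₀ x₁ : E} (hx₀ : x₀ ∈ C) (hx₁ : x₁ ∈ C) {m a b : ℝ} (hm : 0 < m)
    (hsc : ∀ z ∈ C, m * ‖x₁ - x₀‖ ^ 2 ≤ fderiv ℝ (fderiv ℝ f) z (x₁ - x₀) (x₁ - x₀))
    (hopt : f x₁ + g x₁ ≤ f x₀ + g x₀) (hg : g x₀ - g x₁ ≤ a * ‖x₀ - x₁‖)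
    (hgrad : fderiv ℝ f x₀ (x₀ - x₁) ≤ b * ‖x₀ - x₁‖) (hab : 0 ≤ a + b) :
    ‖x₁ - x₀‖ ≤ 2 / m * (a + b) := by
  have htaylor := hf.add_fderiv_add_half_mul_sq_le hC hx₀ hx₁ hsc
  rw [← neg_sub, map_neg, norm_neg] at hgrad
  rw [← norm_neg, neg_sub] at hg
  have hquad : m / 2 * ‖x₁ - x₀‖ * ‖x₁ - x₀‖ ≤ (a + b) * ‖x₁ - x₀‖ := by nlinarith
  rcases (norm_nonneg (x₁ - x₀)).eq_or_lt with h0 | hpos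
  · rw [← h0]; positivity
  · rw [div_mul_eq_mul_div, le_div_iff₀ hm]
    nlinarith [le_of_mul_le_mul_right hquad hpos]

lemma convexOn_univ_of_add_le_of_smul {f : E → ℝ} (hadd : ∀ x y, f (x + y) ≤ f x + f y)
    (hsmul : ∀ c : ℝ, 0 ≤ c → ∀ x, f (c • x) = c * f x) : ConvexOn ℝ univ f :=
  ⟨convex_univ, fun x _ y _ a b ha hb _ => by
    simpa only [hsmul a ha, hsmul b hb, smul_eq_mul] using hadd (a • x) (b • y)⟩

lemma bddAbove_unitBall {f : E → ℝ} {M : Submodule ℝ E} {K : ℝ} (hK0 : 0 ≤ K)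
    (hK : ∀ x, f x ≤ K * ‖x‖) : BddAbove {r | ∃ x, ‖x‖ ≤ 1 ∧ x ∈ M ∧ f x = r} := by
  refine ⟨K, ?_⟩
  rintro _ ⟨y, hy, -, rfl⟩
  exact (hK y).trans (mul_le_of_le_one_right hK0 hy)

lemma le_sSup_unitBall_mul_norm {f : E → ℝ} {M : Submodule ℝ E}
    (hsmul : ∀ c : ℝ, 0 ≤ c → ∀ x, f (c • x) = c * f x) {K : ℝ} (hK0 : 0 ≤ K)
    (hK : ∀ x, f x ≤ K * ‖x‖) {x : E} (hx : x ∈ M) :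
    f x ≤ sSup {r | ∃ x, ‖x‖ ≤ 1 ∧ x ∈ M ∧ f x = r} * ‖x‖ := by
  rcases eq_or_ne x 0 with rfl | hx0
  · simpa using (hsmul 0 le_rfl 0).le
  have hu : f (‖x‖⁻¹ • x) ≤ sSup {r | ∃ x, ‖x‖ ≤ 1 ∧ x ∈ M ∧ f x = r} :=
    le_csSup (bddAbove_unitBall hK0 hK) ⟨_, by simp [norm_smul, hx0], M.smul_mem _ hx, rfl⟩
  calc f x = ‖x‖ * f (‖x‖⁻¹ • x) := by
        rw [← hsmul _ (norm_nonneg x), smul_inv_smul₀ (norm_ne_zero_iff.2 hx0)]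
    _ ≤ _ := by rw [mul_comm]; exact mul_le_mul_of_nonneg_right hu (norm_nonneg x)

lemma sSup_unitBall_nonneg {f : E → ℝ} {M : Submodule ℝ E}
    (hsmul : ∀ c : ℝ, 0 ≤ c → ∀ x, f (c • x) = c * f x) {K : ℝ} (hK0 : 0 ≤ K)
    (hK : ∀ x, f x ≤ K * ‖x‖) : 0 ≤ sSup {r | ∃ x, ‖x‖ ≤ 1 ∧ x ∈ M ∧ f x = r} := by
  refine le_csSup_of_le (bddAbove_unitBall hK0 hK) ⟨0, by simp, M.zero_mem, rfl⟩ ?_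
  simpa using (hsmul 0 le_rfl 0).ge

end NormedSpace

lemma exists_pos_mul_norm_le {E : Type*} [NormedAddCommGroup E] [NormedSpace ℝ E]
    [FiniteDimensional ℝ E] {n : E → ℝ} (hn_nonneg : ∀ x, 0 ≤ n x)
    (hn_def : ∀ x, n x = 0 → x = 0) (hn_smul : ∀ (a : ℝ) x, n (a • x) = |a| * n x)
    (hn_add : ∀ x y, n (x + y) ≤ n x + n y) : ∃ c > 0, ∀ x, c * ‖x‖ ≤ n x := by
  have hsmul (c : ℝ) (hc : 0 ≤ c) (x : E) : n (c • x) = c * n x := by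
    rw [hn_smul, abs_of_nonneg hc]
  have hcont : ContinuousOn n (Metric.sphere 0 1) :=
    ((convexOn_univ_of_add_le_of_smul hn_add hsmul).continuousOn isOpen_univ).mono
      (subset_univ _)
  obtain ⟨c, hc, hcn⟩ := (isCompact_sphere (0 : E) 1).exists_forall_le' hcont
    fun x hx => (hn_nonneg x).lt_of_ne fun h => by simp [hn_def x h.symm] at hx
  refine ⟨c, hc, fun x => ?_⟩
  rcases eq_or_ne x 0 with rfl | hx0
  · simpa using hn_nonneg 0
  calc c * ‖x‖ ≤ n (‖x‖⁻¹ • x) * ‖x‖ :=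
        mul_le_mul_of_nonneg_right (hcn _ (by simp [norm_smul, hx0])) (norm_nonneg x)
    _ = n x := by
        rw [hsmul _ (inv_nonneg.2 (norm_nonneg x))]
        field_simp

lemma isBounded_setOf_le_one {E : Type*} [NormedAddCommGroup E] [NormedSpace ℝ E]
    [FiniteDimensional ℝ E] {n : E → ℝ} (hn_nonneg : ∀ x, 0 ≤ n x)
    (hn_def : ∀ x, n x = 0 → x = 0) (hn_smul : ∀ (a : ℝ) x, n (a • x) = |a| * n x)
    (hn_add : ∀ x y, n (x + y) ≤ n x + n y) : IsBounded {x | n x ≤ 1} := by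
  obtain ⟨c, hc, hcn⟩ := exists_pos_mul_norm_le hn_nonneg hn_def hn_smul hn_add
  refine isBounded_iff_forall_norm_le.2 ⟨c⁻¹, fun x hx => ?_⟩
  rw [← one_div, le_div_iff₀' hc]
  exact (hcn x).trans hx

section SupportFunction

variable {p : ℕ} {A : Set (EuclideanSpace ℝ (Fin p))}

lemma suppFn_bddAbove (hA : IsBounded A) (x : EuclideanSpace ℝ (Fin p)) :
    BddAbove ((fun y => ⟪y, x⟫) '' A) := by
  obtain ⟨R, hR⟩ := hA.exists_norm_le
  refine ⟨R * ‖x‖, ?_⟩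
  rintro _ ⟨y, hy, rfl⟩
  exact (real_inner_le_norm y x).trans (mul_le_mul_of_nonneg_right (hR y hy) (norm_nonneg x))

lemma inner_le_suppFn (hA : IsBounded A) {y : EuclideanSpace ℝ (Fin p)} (hy : y ∈ A)
    (x : EuclideanSpace ℝ (Fin p)) : ⟪y, x⟫ ≤ suppFn A x :=
  le_csSup (suppFn_bddAbove hA x) ⟨y, hy, rfl⟩

lemma suppFn_le_mul_norm (hA : IsBounded A) :
    ∃ R ≥ 0, ∀ x, suppFn A x ≤ R * ‖x‖ := by
  obtain ⟨R, hR0, hR⟩ := hA.exists_pos_norm_le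
  refine ⟨R, hR0.le, fun x => Real.sSup_le ?_ (by positivity)⟩
  rintro _ ⟨y, hy, rfl⟩
  exact (real_inner_le_norm y x).trans (mul_le_mul_of_nonneg_right (hR y hy) (norm_nonneg x))

lemma suppFn_add_le (hAne : A.Nonempty) (hA : IsBounded A) (x z : EuclideanSpace ℝ (Fin p)) :
    suppFn A (x + z) ≤ suppFn A x + suppFn A z := by
  refine csSup_le (hAne.image _) ?_
  rintro _ ⟨y, hy, rfl⟩
  dsimp only
  rw [inner_add_right]
  exact add_le_add (inner_le_suppFn hA hy x) (inner_le_suppFn hA hy z)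

lemma suppFn_sub_le (hAne : A.Nonempty) (hA : IsBounded A) (x z : EuclideanSpace ℝ (Fin p)) :
    suppFn A x - suppFn A z ≤ suppFn A (x - z) := by
  have h := suppFn_add_le hAne hA z (x - z)
  rw [add_sub_cancel] at h
  linarith

lemma suppFn_smul {c : ℝ} (hc : 0 ≤ c) (x : EuclideanSpace ℝ (Fin p)) :
    suppFn A (c • x) = c * suppFn A x := by
  rw [suppFn, suppFn, ← smul_eq_mul, ← Real.sSup_smul_of_nonneg hc, ← image_smul, image_image]
  simp only [real_inner_smul_right, smul_eq_mul]

lemma convexOn_suppFn (hAne : A.Nonempty) (hA : IsBounded A) : ConvexOn ℝ univ (suppFn A) :=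
  convexOn_univ_of_add_le_of_smul (suppFn_add_le hAne hA) fun _ hc => suppFn_smul hc

lemma inner_le_mul_suppFn_unitBall {n : EuclideanSpace ℝ (Fin p) → ℝ}
    (hn_nonneg : ∀ x, 0 ≤ n x) (hn_def : ∀ x, n x = 0 → x = 0)
    (hn_smul : ∀ (a : ℝ) x, n (a • x) = |a| * n x) (hB : IsBounded {x | n x ≤ 1})
    (x y : EuclideanSpace ℝ (Fin p)) : ⟪x, y⟫ ≤ n x * suppFn {x | n x ≤ 1} y := by
  rcases (hn_nonneg x).eq_or_lt with h0 | hpos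
  · obtain rfl := hn_def x h0.symm
    simp [← h0]
  have hw : (n x)⁻¹ • x ∈ {x | n x ≤ 1} := by
    simp [hn_smul, abs_of_pos hpos, hpos.ne']
  calc ⟪x, y⟫ = n x * ⟪(n x)⁻¹ • x, y⟫ := by
        rw [real_inner_smul_left, mul_inv_cancel_left₀ hpos.ne']
    _ ≤ n x * suppFn {x | n x ≤ 1} y :=
        mul_le_mul_of_nonneg_left (inner_le_suppFn hB hw y) hpos.le

lemma suppFn_le_sSup_unitBall_mul_norm (hA : IsBounded A)
    {M : Submodule ℝ (EuclideanSpace ℝ (Fin p))} {x : EuclideanSpace ℝ (Fin p)} (hx : x ∈ M) :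
    suppFn A x ≤ sSup {r | ∃ x, ‖x‖ ≤ 1 ∧ x ∈ M ∧ suppFn A x = r} * ‖x‖ :=
  have ⟨_, hR0, hR⟩ := suppFn_le_mul_norm hA
  le_sSup_unitBall_mul_norm (fun _ hc => suppFn_smul hc) hR0 hR hx

lemma sSup_unitBall_suppFn_nonneg (hA : IsBounded A)
    (M : Submodule ℝ (EuclideanSpace ℝ (Fin p))) :
    0 ≤ sSup {r | ∃ x, ‖x‖ ≤ 1 ∧ x ∈ M ∧ suppFn A x = r} :=
  have ⟨_, hR0, hR⟩ := suppFn_le_mul_norm hA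
  sSup_unitBall_nonneg (fun _ hc => suppFn_smul hc) hR0 hR

end SupportFunction

theorem restricted_estimator_consistency_general {p : ℕ}
    (ℓ : EuclideanSpace ℝ (Fin p) → ℝ) (hℓ : ContDiff ℝ 2 ℓ)
    (hℓconv : ConvexOn ℝ Set.univ ℓ)
    (M : Submodule ℝ (EuclideanSpace ℝ (Fin p)))
    (A : Set (EuclideanSpace ℝ (Fin p))) (hAne : A.Nonempty)
    (hAb : Bornology.IsBounded A)
    (C : Set (EuclideanSpace ℝ (Fin p))) (hCconv : Convex ℝ C)
    (hCM : C ⊆ (M : Set (EuclideanSpace ℝ (Fin p))))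
    (θstar θhat : EuclideanSpace ℝ (Fin p)) (hθstar : θstar ∈ C) (hθhat : θhat ∈ C)
    (m : ℝ) (hm : 0 < m)
    -- restricted strong convexity: `x^T ∇²ℓ(θ) x ≥ m ‖x‖₂²` for `θ ∈ C`, `x ∈ M`
    (hsc : ∀ θ ∈ C, ∀ x ∈ M, m * ‖x‖ ^ 2 ≤ fderiv ℝ (fderiv ℝ ℓ) θ x x)
    -- an abstract error norm `n` with its dual norm `nstar`
    (n : EuclideanSpace ℝ (Fin p) → ℝ)
    (hn_nonneg : ∀ x, 0 ≤ n x) (hn_def : ∀ x, n x = 0 → x = 0)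
    (hn_smul : ∀ (a : ℝ) x, n (a • x) = |a| * n x)
    (hn_add : ∀ x y, n (x + y) ≤ n x + n y)
    (nstar : EuclideanSpace ℝ (Fin p) → ℝ)
    (hnstar : ∀ y, nstar y = sSup {r : ℝ | ∃ x, n x ≤ 1 ∧ ⟪x, y⟫ = r})
    (κerrstar κA : ℝ)
    (hκerrstar : κerrstar = sSup {r : ℝ | ∃ x, ‖x‖ ≤ 1 ∧ x ∈ M ∧ nstar x = r})
    (hκA : κA = sSup {r : ℝ | ∃ x, ‖x‖ ≤ 1 ∧ x ∈ M ∧ suppFn A x = r})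
    (τ τbar lam : ℝ) (hτ : 0 < τ) (hττbar : τ ≤ τbar)
    (hlam : lam > (2 * τbar / τ) * n (gradient ℓ θstar))
    (hmin : IsMinOn (fun θ => ℓ θ + lam * suppFn A θ)
      (M : Set (EuclideanSpace ℝ (Fin p))) θhat) :
    (∀ θ' ∈ (M : Set (EuclideanSpace ℝ (Fin p))),
        IsMinOn (fun θ => ℓ θ + lam * suppFn A θ) (M : Set (EuclideanSpace ℝ (Fin p))) θ' →
        θ' = θhat) ∧
    ‖θhat - θstar‖ ≤ (2 / m) * (κA + (τ / (2 * τbar)) * κerrstar) * lam := by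
  have hτbar : 0 < τbar := hτ.trans_le hττbar
  have hlam0 : 0 < lam := (mul_nonneg (by positivity) (hn_nonneg _)).trans_lt hlam
  have hpen : ConvexOn ℝ M fun θ => lam * suppFn A θ :=
    ((convexOn_suppFn hAne hAb).subset (subset_univ _) M.convex).smul hlam0.le
  refine ⟨fun θ' hθ' hmin' => hℓ.eq_of_isMinOn_add (hℓconv.subset (subset_univ _) M.convex)
    hpen (hCM hθhat) hθ' hmin hmin' hm (hsc _ hθhat _ (M.sub_mem hθ' (hCM hθhat))), ?_⟩
  obtain rfl : nstar = suppFn {x | n x ≤ 1} := funext hnstar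
  have hB := isBounded_setOf_le_one hn_nonneg hn_def hn_smul hn_add
  have hΔ : θstar - θhat ∈ M := M.sub_mem (hCM hθstar) (hCM hθhat)
  have hκA0 : 0 ≤ κA := hκA ▸ sSup_unitBall_suppFn_nonneg hAb M
  have hκerr0 : 0 ≤ κerrstar := hκerrstar ▸ sSup_unitBall_suppFn_nonneg hB M
  have hgrad : n (gradient ℓ θstar) ≤ τ / (2 * τbar) * lam := by
    rw [gt_iff_lt, div_mul_eq_mul_div, div_lt_iff₀ hτ] at hlam
    rw [div_mul_eq_mul_div, le_div_iff₀ (by positivity)]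
    linarith
  have hsupp := hκA ▸ suppFn_le_sSup_unitBall_mul_norm hAb hΔ
  have hdual := hκerrstar ▸ suppFn_le_sSup_unitBall_mul_norm hB hΔ
  refine (hℓ.norm_sub_le_of_add_le_add (g := fun θ => lam * suppFn A θ) (a := lam * κA)
    (b := τ / (2 * τbar) * lam * κerrstar) hCconv hθstar hθhat hm
    (fun θ hθ => hsc θ hθ _ (M.sub_mem (hCM hθhat) (hCM hθstar))) (hmin (hCM hθstar))
    ?_ ?_ (by positivity)).trans_eq (by ring)
  · rw [← mul_sub, mul_assoc]
    exact mul_le_mul_of_nonneg_left ((suppFn_sub_le hAne hAb _ _).trans hsupp) hlam0.le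
  · rw [← inner_gradient_left]
    calc ⟪gradient ℓ θstar, θstar - θhat⟫
        ≤ n (gradient ℓ θstar) * suppFn {x | n x ≤ 1} (θstar - θhat) :=
          inner_le_mul_suppFn_unitBall hn_nonneg hn_def hn_smul hB _ _
      _ ≤ n (gradient ℓ θstar) * (κerrstar * ‖θstar - θhat‖) :=
          mul_le_mul_of_nonneg_left hdual (hn_nonneg _)
      _ ≤ τ / (2 * τbar) * lam * κerrstar * ‖θstar - θhat‖ := by
          rw [mul_assoc _ κerrstar]
          exact mul_le_mul_of_nonneg_right hgrad (by positivity)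

/-- Consistency of the restricted M-estimator: under `m`-restricted strong convexity and
`λ > (2τ̄/τ)‖∇ℓ(θ*)‖`, the minimizer of `ℓ + λ h_A` over the model subspace `M` is unique and
satisfies `‖θ̂ − θ*‖₂ ≤ (2/m)(κ_A + (τ/(2τ̄))κ_{err*}) λ`. -/
theorem restricted_estimator_consistency {p : ℕ}
    (ℓ : EuclideanSpace ℝ (Fin p) → ℝ) (hℓ : ContDiff ℝ 2 ℓ)
    (hℓconv : ConvexOn ℝ Set.univ ℓ)
    (M : Submodule ℝ (EuclideanSpace ℝ (Fin p)))
    (A : Set (EuclideanSpace ℝ (Fin p))) (hAne : A.Nonempty)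
    (hAc : IsClosed A) (hAconv : Convex ℝ A) (hAb : Bornology.IsBounded A)
    (C : Set (EuclideanSpace ℝ (Fin p))) (hCconv : Convex ℝ C)
    (hCM : C ⊆ (M : Set (EuclideanSpace ℝ (Fin p))))
    (θstar θhat : EuclideanSpace ℝ (Fin p)) (hθstar : θstar ∈ C) (hθhat : θhat ∈ C)
    (m : ℝ) (hm : 0 < m)
    -- restricted strong convexity: `x^T ∇²ℓ(θ) x ≥ m ‖x‖₂²` for `θ ∈ C`, `x ∈ M`
    (hsc : ∀ θ ∈ C, ∀ x ∈ M, m * ‖x‖ ^ 2 ≤ fderiv ℝ (fderiv ℝ ℓ) θ x x)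
    -- an abstract error norm `n` with its dual norm `nstar`
    (n : EuclideanSpace ℝ (Fin p) → ℝ)
    (hn_nonneg : ∀ x, 0 ≤ n x) (hn_def : ∀ x, n x = 0 → x = 0)
    (hn_smul : ∀ (a : ℝ) x, n (a • x) = |a| * n x)
    (hn_add : ∀ x y, n (x + y) ≤ n x + n y)
    (nstar : EuclideanSpace ℝ (Fin p) → ℝ)
    (hnstar : ∀ y, nstar y = sSup {r : ℝ | ∃ x, n x ≤ 1 ∧ ⟪x, y⟫ = r})
    (κerrstar κA : ℝ)
    (hκerrstar : κerrstar = sSup {r : ℝ | ∃ x, ‖x‖ ≤ 1 ∧ x ∈ M ∧ nstar x = r})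
    (hκA : κA = sSup {r : ℝ | ∃ x, ‖x‖ ≤ 1 ∧ x ∈ M ∧ suppFn A x = r})
    (τ τbar lam : ℝ) (hτ : 0 < τ) (hττbar : τ ≤ τbar)
    (hlam : lam > (2 * τbar / τ) * n (gradient ℓ θstar))
    (hmin : IsMinOn (fun θ => ℓ θ + lam * suppFn A θ)
      (M : Set (EuclideanSpace ℝ (Fin p))) θhat) :
    (∀ θ' ∈ (M : Set (EuclideanSpace ℝ (Fin p))),
        IsMinOn (fun θ => ℓ θ + lam * suppFn A θ) (M : Set (EuclideanSpace ℝ (Fin p))) θ' →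
        θ' = θhat) ∧
    ‖θhat - θstar‖ ≤ (2 / m) * (κA + (τ / (2 * τbar)) * κerrstar) * lam :=
  restricted_estimator_consistency_general ℓ hℓ hℓconv M A hAne hAb C hCconv hCM θstar θhat hθstar
    hθhat m hm hsc n hn_nonneg hn_def hn_smul hn_add nstar hnstar κerrstar κA hκerrstar hκA τ τbar
    lam hτ hττbar hlam hmin
end

section
/- ℓ_{2,1} bound for the penalized MLE: Let ℓ(θ) = −⟨θ, φⁿ⟩ + A(θ) with A convex differentiable, θ* a point with ∇A(θ*) = φ*, and θ̂ a minimizer of ℓ(θ) + λ‖θ‖_{2,1}. If λ > ‖φⁿ − φ*‖_{2,∞}, then ‖θ̂‖_{2,1} ≤ (λ‖θ*‖_{2,1} + ‖φⁿ − φ*‖_{2,∞}‖θ*‖_{2,1}) / (λ − ‖φⁿ − φ*‖_{2,∞}). -/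
open RealInnerProductSpace

/-- The ℓ2 norm of the subvector of `x` on the group `{i | grp i = g}`. -/
noncomputable def groupNorm {p : ℕ} {G : Type*} [Fintype G] [DecidableEq G] (grp : Fin p → G)
    (x : EuclideanSpace ℝ (Fin p)) (g : G) : ℝ :=
  Real.sqrt (∑ i ∈ Finset.univ.filter (fun i => grp i = g), (x i) ^ 2)

/-- The group ℓ_{2,1} norm `Σ_g ‖x_g‖₂`. -/
noncomputable def norm21 {p : ℕ} {G : Type*} [Fintype G] [DecidableEq G] (grp : Fin p → G)
    (x : EuclideanSpace ℝ (Fin p)) : ℝ :=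
  ∑ g : G, groupNorm grp x g

/-- The group ℓ_{2,∞} norm `max_g ‖x_g‖₂`. -/
noncomputable def norm2inf {p : ℕ} {G : Type*} [Fintype G] [DecidableEq G] (grp : Fin p → G)
    (x : EuclideanSpace ℝ (Fin p)) : ℝ :=
  ⨆ g : G, groupNorm grp x g

/-! Comparing the objective at `θ̂` with its value at `θ*` and using the tangent-line inequality
of the convex `A` at `θ*` gives the basic inequality
`λ‖θ̂‖_{2,1} ≤ λ‖θ*‖_{2,1} + ⟪θ̂ - θ*, φⁿ - φ*⟫`. Group-wise Cauchy–Schwarz (duality of the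
`ℓ_{2,1}` and `ℓ_{2,∞}` norms) and the triangle inequality bound the inner product by
`(‖θ̂‖_{2,1} + ‖θ*‖_{2,1}) ‖φⁿ - φ*‖_{2,∞}`, and since `λ` exceeds that dual norm the `θ̂` terms
can be collected on the left. -/

theorem ConvexOn.apply_add_le_of_hasFDerivAt {E : Type*} [NormedAddCommGroup E] [NormedSpace ℝ E]
    {s : Set E} {f : E → ℝ} {f' : E →L[ℝ] ℝ} {x y : E} (hf : ConvexOn ℝ s f) (hx : x ∈ s)
    (hy : y ∈ s) (hf' : HasFDerivAt f f' x) : f x + f' (y - x) ≤ f y := by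
  have hline : ConvexOn ℝ (AffineMap.lineMap x y ⁻¹' s) (f ∘ AffineMap.lineMap (k := ℝ) x y) :=
    hf.comp_affineMap (AffineMap.lineMap x y)
  have hderiv : HasDerivAt (f ∘ AffineMap.lineMap (k := ℝ) x y) (f' (y - x)) 0 :=
    hf'.comp_hasDerivAt_of_eq (0 : ℝ) AffineMap.hasDerivAt_lineMap
      (AffineMap.lineMap_apply_zero x y).symm
  have := hline.le_slope_of_hasDerivAt (x := 0) (y := 1) (by simpa) (by simpa) zero_lt_one hderiv
  simp only [slope_def_field, Function.comp_apply, AffineMap.lineMap_apply_zero,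
    AffineMap.lineMap_apply_one, sub_zero, div_one] at this
  linarith

theorem ConvexOn.apply_add_inner_gradient_le {E : Type*} [NormedAddCommGroup E]
    [InnerProductSpace ℝ E] [CompleteSpace E] {s : Set E} {f : E → ℝ} {x y : E}
    (hf : ConvexOn ℝ s f) (hx : x ∈ s) (hy : y ∈ s) (hfx : DifferentiableAt ℝ f x) :
    f x + ⟪gradient f x, y - x⟫ ≤ f y := by
  simpa [gradient] using hf.apply_add_le_of_hasFDerivAt hx hy hfx.hasFDerivAt

lemma Finset.sum_filter_univ_eq_sum_subtype {ι M : Type*} [Fintype ι] [AddCommMonoid M]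
    (P : ι → Prop) [DecidablePred P] (f : ι → M) :
    ∑ i ∈ Finset.univ.filter P, f i = ∑ i : Subtype P, f i :=
  Finset.sum_subtype _ (by simp) f

section GroupNorms

variable {p : ℕ} {G : Type*} (grp : Fin p → G)

noncomputable def groupRestrict (g : G) (x : EuclideanSpace ℝ (Fin p)) :
    EuclideanSpace ℝ {i : Fin p // grp i = g} :=
  WithLp.toLp 2 fun i => x i.1

lemma groupRestrict_sub (g : G) (x y : EuclideanSpace ℝ (Fin p)) :
    groupRestrict grp g (x - y) = groupRestrict grp g x - groupRestrict grp g y := rfl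

variable [Fintype G] [DecidableEq G]

lemma groupNorm_eq_norm_groupRestrict (x : EuclideanSpace ℝ (Fin p)) (g : G) :
    groupNorm grp x g = ‖groupRestrict grp g x‖ := by
  simp [groupNorm, EuclideanSpace.norm_eq, groupRestrict, Finset.sum_filter_univ_eq_sum_subtype]

lemma inner_eq_sum_inner_groupRestrict (u v : EuclideanSpace ℝ (Fin p)) :
    ⟪u, v⟫ = ∑ g : G, ⟪groupRestrict grp g u, groupRestrict grp g v⟫ := by
  simp only [PiLp.inner_apply, groupRestrict]
  rw [← Finset.sum_fiberwise Finset.univ grp]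
  simp only [Finset.sum_filter_univ_eq_sum_subtype]

lemma groupNorm_nonneg (x : EuclideanSpace ℝ (Fin p)) (g : G) : 0 ≤ groupNorm grp x g :=
  Real.sqrt_nonneg _

lemma groupNorm_le_norm2inf (x : EuclideanSpace ℝ (Fin p)) (g : G) :
    groupNorm grp x g ≤ norm2inf grp x :=
  le_ciSup (Set.finite_range _).bddAbove g

lemma norm2inf_nonneg (x : EuclideanSpace ℝ (Fin p)) : 0 ≤ norm2inf grp x :=
  Real.iSup_nonneg (groupNorm_nonneg grp x)

lemma norm21_sub_le (x y : EuclideanSpace ℝ (Fin p)) :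
    norm21 grp (x - y) ≤ norm21 grp x + norm21 grp y := by
  simp only [norm21, groupNorm_eq_norm_groupRestrict, groupRestrict_sub, ← Finset.sum_add_distrib]
  exact Finset.sum_le_sum fun g _ => norm_sub_le _ _

lemma inner_le_norm21_mul_norm2inf (u v : EuclideanSpace ℝ (Fin p)) :
    ⟪u, v⟫ ≤ norm21 grp u * norm2inf grp v := by
  rw [inner_eq_sum_inner_groupRestrict grp, norm21, Finset.sum_mul]
  refine Finset.sum_le_sum fun g _ => ?_
  calc ⟪groupRestrict grp g u, groupRestrict grp g v⟫
      ≤ ‖groupRestrict grp g u‖ * ‖groupRestrict grp g v‖ := real_inner_le_norm _ _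
    _ = groupNorm grp u g * groupNorm grp v g := by
      rw [groupNorm_eq_norm_groupRestrict, groupNorm_eq_norm_groupRestrict]
    _ ≤ groupNorm grp u g * norm2inf grp v :=
      mul_le_mul_of_nonneg_left (groupNorm_le_norm2inf grp v g) (groupNorm_nonneg grp u g)

end GroupNorms

theorem IsMinOn.penalty_le_add_inner {E : Type*} [NormedAddCommGroup E] [InnerProductSpace ℝ E]
    [CompleteSpace E] {A R : E → ℝ} (hAconv : ConvexOn ℝ Set.univ A) {θstar θhat φn : E}
    (hAdiff : DifferentiableAt ℝ A θstar) {lam : ℝ}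
    (hmin : IsMinOn (fun θ => -⟪θ, φn⟫ + A θ + lam * R θ) Set.univ θhat) :
    lam * R θhat ≤ lam * R θstar + ⟪θhat - θstar, φn - gradient A θstar⟫ := by
  have hopt : -⟪θhat, φn⟫ + A θhat + lam * R θhat ≤ -⟪θstar, φn⟫ + A θstar + lam * R θstar :=
    hmin (Set.mem_univ θstar)
  have htangent := hAconv.apply_add_inner_gradient_le (Set.mem_univ θstar) (Set.mem_univ θhat)
    hAdiff
  simp only [inner_sub_left, inner_sub_right, real_inner_comm (gradient A θstar)] at htangent ⊢
  linarith

theorem penalized_mle_l21_bound_general {p : ℕ} {G : Type*} [Fintype G] [DecidableEq G]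
    (grp : Fin p → G)
    (A : EuclideanSpace ℝ (Fin p) → ℝ) (hAconv : ConvexOn ℝ Set.univ A)
    (hAdiff : Differentiable ℝ A)
    (φn φstar θstar θhat : EuclideanSpace ℝ (Fin p))
    (hgrad : gradient A θstar = φstar)
    (lam : ℝ) (hlam : norm2inf grp (φn - φstar) < lam)
    (hmin : IsMinOn (fun θ => -⟪θ, φn⟫ + A θ + lam * norm21 grp θ) Set.univ θhat) :
    norm21 grp θhat ≤
      (lam * norm21 grp θstar + norm2inf grp (φn - φstar) * norm21 grp θstar)
        / (lam - norm2inf grp (φn - φstar)) := by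
  have hbasic := hmin.penalty_le_add_inner hAconv (hAdiff θstar)
  rw [hgrad] at hbasic
  have hdual : ⟪θhat - θstar, φn - φstar⟫
      ≤ (norm21 grp θhat + norm21 grp θstar) * norm2inf grp (φn - φstar) :=
    (inner_le_norm21_mul_norm2inf grp _ _).trans
      (mul_le_mul_of_nonneg_right (norm21_sub_le grp _ _) (norm2inf_nonneg grp _))
  rw [le_div_iff₀ (sub_pos.2 hlam)]
  linarith

/-- ℓ_{2,1} bound for the penalized MLE: if `θ̂` minimizes `−⟪θ, φⁿ⟫ + A(θ) + λ‖θ‖_{2,1}` with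
`A` convex differentiable, `∇A(θ*) = φ*`, and `λ > ‖φⁿ − φ*‖_{2,∞}`, then
`‖θ̂‖_{2,1} ≤ (λ‖θ*‖_{2,1} + ‖φⁿ − φ*‖_{2,∞}‖θ*‖_{2,1}) / (λ − ‖φⁿ − φ*‖_{2,∞})`. -/
theorem penalized_mle_l21_bound {p : ℕ} {G : Type*} [Fintype G] [DecidableEq G] [Nonempty G]
    (grp : Fin p → G)
    (A : EuclideanSpace ℝ (Fin p) → ℝ) (hAconv : ConvexOn ℝ Set.univ A)
    (hAdiff : Differentiable ℝ A)
    (φn φstar θstar θhat : EuclideanSpace ℝ (Fin p))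
    (hgrad : gradient A θstar = φstar)
    (lam : ℝ) (hlam : norm2inf grp (φn - φstar) < lam)
    (hmin : IsMinOn (fun θ => -⟪θ, φn⟫ + A θ + lam * norm21 grp θ) Set.univ θhat) :
    norm21 grp θhat ≤
      (lam * norm21 grp θstar + norm2inf grp (φn - φstar) * norm21 grp θstar)
        / (lam - norm2inf grp (φn - φstar)) :=
  penalized_mle_l21_bound_general grp A hAconv hAdiff φn φstar θstar θhat hgrad lam hlam hmin
end
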